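/- arXiv:2507.04341 — 2 statements merged into one kernel-verified Lean document; each statement's English description precedes it below -/
import Mathlib

section
/- Let P_abs be the n×n matrix with last row all ones, P(n,n)=1, and all other entries zero, and Q_abs = P_abs − I. Then for τ ≥ 0, the matrix exponential Y = exp(τ·Q_abs) satisfies: Y(i,i) = e^{−τ} for i ≠ n, Y(n,j) = 1 − e^{−τ} for j ≠ n, Y(n,n) = 1, and all other entries are 0. -/
/-!
`P = e_n 1ᵀ` (with `e_n` the last basis vector) is idempotent since `1ᵀ e_n = 1`; hence so is
`1 - P`, and `τ • (P - 1) = (-τ) • (1 - P)`. For an idempotent `e` every power `e ^ k` with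
`k ≥ 1` equals `e`, so the exponential series collapses to `exp (s • e) = (1 - e) + exp s • e`.
Therefore `exp (τ • (P - 1)) = P + exp (-τ) • (1 - P)`, whose entries are the claimed ones.
-/

open NormedSpace Matrix Nat

theorem IsIdempotentElem.exp_smul {𝕂 𝔸 : Type*} [RCLike 𝕂] [NormedRing 𝔸] [NormedAlgebra 𝕂 𝔸]
    [CompleteSpace 𝔸] {e : 𝔸} (he : IsIdempotentElem e) (t : 𝕂) :
    exp (t • e) = 1 - e + exp t • e := by
  have hsum : HasSum (fun k : ℕ => ((k !⁻¹ : 𝕂) • t ^ k) • e + if k = 0 then 1 - e else 0)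
      (exp t • e + (1 - e)) :=
    ((exp_series_hasSum_exp' t).smul_const e).add (hasSum_ite_eq 0 (1 - e))
  refine (exp_series_hasSum_exp' (𝕂 := 𝕂) (t • e)).unique
    (add_comm (1 - e) _ ▸ hsum.congr_fun fun k => ?_)
  rcases k with _ | k
  · simp
  · rw [smul_pow, he.pow_succ_eq, smul_smul, smul_eq_mul]
    simp

theorem Matrix.isIdempotentElem_vecMulVec {n α : Type*} [Fintype n] [Semiring α]
    {u v : n → α} (h : v ⬝ᵥ u = 1) : IsIdempotentElem (vecMulVec u v) := by
  rw [IsIdempotentElem, vecMulVec_mul_vecMulVec, h, one_smul]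

theorem stmt_2_general (N : ℕ) (τ : ℝ)
    (P : Matrix (Fin (N + 2)) (Fin (N + 2)) ℝ)
    (hP : ∀ i j, P i j = if i = Fin.last (N + 1) then 1 else 0) :
    (∀ i, i ≠ Fin.last (N + 1) →
      NormedSpace.exp (τ • (P - 1)) i i = Real.exp (-τ)) ∧
    (∀ j, j ≠ Fin.last (N + 1) →
      NormedSpace.exp (τ • (P - 1)) (Fin.last (N + 1)) j = 1 - Real.exp (-τ)) ∧
    NormedSpace.exp (τ • (P - 1)) (Fin.last (N + 1)) (Fin.last (N + 1)) = 1 ∧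
    (∀ i j, i ≠ j → i ≠ Fin.last (N + 1) →
      NormedSpace.exp (τ • (P - 1)) i j = 0) := by
  have hP_idem : IsIdempotentElem P := by
    have hP_eq : P = vecMulVec (Pi.single (Fin.last (N + 1)) 1) 1 := by
      ext i j
      simp [hP, vecMulVec_apply, Pi.single_apply]
    exact hP_eq ▸ isIdempotentElem_vecMulVec (by simp)
  have hexp : exp (τ • (P - 1)) = P + Real.exp (-τ) • (1 - P) := by
    -- `exp` only sees the product topology on matrices, which the ℓ∞ operator norm induces;
    -- that norm just makes the Banach-algebra lemma applicable (up to a defeq, hence `exact`).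
    let _ := Matrix.linftyOpNormedRing (n := Fin (N + 2)) (α := ℝ)
    let _ := Matrix.linftyOpNormedAlgebra (n := Fin (N + 2)) (R := ℝ) (α := ℝ)
    rw [← neg_sub, smul_neg, ← neg_smul, Real.exp_eq_exp_ℝ]
    exact (hP_idem.one_sub.exp_smul (-τ)).trans (by rw [sub_sub_cancel])
  rw [hexp]
  refine ⟨fun i hi => ?_, fun j hj => ?_, ?_, fun i j hij hi => ?_⟩ <;>
    simp [one_apply, Ne.symm, sub_eq_add_neg, *]

/-- Entries of the matrix exponential of the absorb rate matrix `Q_abs = P_abs - I`,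
where `P_abs` has last row all ones and all other entries zero.  Here `n = N + 2 ≥ 2`
and the absorbing state is `Fin.last (N+1)`. -/
theorem stmt_2 (N : ℕ) (τ : ℝ) (hτ : 0 ≤ τ)
    (P : Matrix (Fin (N + 2)) (Fin (N + 2)) ℝ)
    (hP : ∀ i j, P i j = if i = Fin.last (N + 1) then 1 else 0) :
    (∀ i, i ≠ Fin.last (N + 1) →
      NormedSpace.exp (τ • (P - 1)) i i = Real.exp (-τ)) ∧
    (∀ j, j ≠ Fin.last (N + 1) →
      NormedSpace.exp (τ • (P - 1)) (Fin.last (N + 1)) j = 1 - Real.exp (-τ)) ∧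
    NormedSpace.exp (τ • (P - 1)) (Fin.last (N + 1)) (Fin.last (N + 1)) = 1 ∧
    (∀ i j, i ≠ j → i ≠ Fin.last (N + 1) →
      NormedSpace.exp (τ • (P - 1)) i j = 0) :=
  stmt_2_general N τ P hP
end

section
/- Let n ≥ 2, 0 ≤ p_m ≤ 1, and Q_roul = p_m·Q_abs + (1−p_m)·Q_unif where Q_abs and Q_unif are the absorb and (padded) uniform rate matrices. Then for σ ≥ 0 the matrix exponential Y = exp(σ·Q_roul) satisfies: Y(i,j) = e^{−σ p_m}·(1/(n−1))·(1 − e^{−(1−p_m)σ}) for i ≠ j with i,j ≠ n; Y(i,i) = e^{−σ p_m}·(1 − ((n−2)/(n−1))(1 − e^{−(1−p_m)σ})) for i ≠ n; Y(n,j) = 1 − e^{−σ p_m} for j ≠ n; Y(i,n) = 0 for i ≠ n; and Y(n,n) = 1. -/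
/-!
Let `t` be the indicator of the transient states `i ≠ n`, `m = t / (n - 1)` the uniform
distribution on them and `e_n` the absorbing state. With `P₁ = (m - e_n) tᵀ` and
`P₂ = diag t - m tᵀ` one has `Q_abs = -(P₁ + P₂)` and `Q_unif = -P₂`, so
`Q_roul = -(p_m • P₁ + P₂)`. Both `P₁` and `P₂` are idempotent and `P₁ P₂ = P₂ P₁ = 0`, so the
exponential series collapses to `exp(σ Q_roul) = 1 + (e^{-σ p_m} - 1) • P₁ + (e^{-σ} - 1) • P₂`.
-/

open Matrix NormedSpace
open scoped Nat

section OrthogonalIdempotents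

variable {𝔸 : Type*} [Ring 𝔸] [Algebra ℝ 𝔸] {P R : 𝔸}

theorem pow_succ_smul_add_smul_of_orthogonal (hP : IsIdempotentElem P)
    (hR : IsIdempotentElem R) (hPR : P * R = 0) (hRP : R * P = 0) (a b : ℝ) (n : ℕ) :
    (a • P + b • R) ^ (n + 1) = a ^ (n + 1) • P + b ^ (n + 1) • R := by
  induction n with
  | zero => simp
  | succ n ih =>
    rw [pow_succ, ih]
    simp only [add_mul, mul_add, smul_mul_smul, hP.eq, hR.eq, hPR, hRP, smul_zero, add_zero,
      zero_add, ← pow_succ]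

theorem exp_smul_add_smul_of_orthogonal [TopologicalSpace 𝔸] [IsTopologicalRing 𝔸]
    [ContinuousSMul ℝ 𝔸] [T2Space 𝔸] (hP : IsIdempotentElem P) (hR : IsIdempotentElem R)
    (hPR : P * R = 0) (hRP : R * P = 0) (a b : ℝ) :
    exp (a • P + b • R) = 1 + (Real.exp a - 1) • P + (Real.exp b - 1) • R := by
  -- `(a • P + b • R) ^ n = a ^ n • P + b ^ n • R` for `n ≥ 1`, while the `n = 0` term `1`
  -- is split as `P + R + (1 - P - R)`.
  have hterm : ∀ n : ℕ, (n !⁻¹ : ℝ) • (a • P + b • R) ^ n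
      = (a ^ n / n !) • P + (b ^ n / n !) • R + if n = 0 then 1 - P - R else 0 := by
    rintro (_ | n)
    · simp
    · simp [pow_succ_smul_add_smul_of_orthogonal hP hR hPR hRP, smul_smul, div_eq_inv_mul]
  have hexp (c : ℝ) : HasSum (fun n : ℕ => c ^ n / n !) (Real.exp c) := by
    rw [Real.exp_eq_exp_ℝ]
    exact expSeries_div_hasSum_exp c
  rw [exp_eq_tsum ℝ]
  refine HasSum.tsum_eq ?_
  simp_rw [hterm]
  convert (((hexp a).smul_const P).add ((hexp b).smul_const R)).add
    (hasSum_ite_eq 0 (1 - P - R)) using 1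
  simp only [sub_smul, one_smul]
  abel

end OrthogonalIdempotents

namespace Matrix

variable {R ι : Type*} [CommRing R] [Fintype ι] {t m u : ι → R}

theorem isIdempotentElem_vecMulVec_s5 (h : t ⬝ᵥ u = 1) : IsIdempotentElem (vecMulVec u t) := by
  rw [IsIdempotentElem, vecMulVec_mul_vecMulVec, h, one_smul]

variable [DecidableEq ι]

theorem diagonal_mul_vecMulVec (t u v : ι → R) :
    diagonal t * vecMulVec u v = vecMulVec (t * u) v := by
  rw [mul_vecMulVec]
  congr 1
  ext x
  exact mulVec_diagonal t u x

theorem vecMulVec_mul_diagonal (t u v : ι → R) :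
    vecMulVec u v * diagonal t = vecMulVec u (v * t) := by
  rw [vecMulVec_mul]
  congr 1
  ext x
  exact vecMul_diagonal v t x

theorem isIdempotentElem_diagonal_sub_vecMulVec (ht : IsIdempotentElem t) (htm : t * m = m)
    (hmt : t ⬝ᵥ m = 1) : IsIdempotentElem (diagonal t - vecMulVec m t) := by
  rw [IsIdempotentElem, sub_mul, mul_sub, mul_sub, diagonal_mul_diagonal, ← Pi.mul_def,
    diagonal_mul_vecMulVec, vecMulVec_mul_diagonal, vecMulVec_mul_vecMulVec, hmt, one_smul, ht.eq, htm]
  abel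

theorem vecMulVec_mul_diagonal_sub_vecMulVec (ht : IsIdempotentElem t) (hmt : t ⬝ᵥ m = 1) :
    vecMulVec u t * (diagonal t - vecMulVec m t) = 0 := by
  rw [mul_sub, vecMulVec_mul_diagonal, vecMulVec_mul_vecMulVec, hmt, one_smul, ht.eq, sub_self]

theorem diagonal_sub_vecMulVec_mul_vecMulVec (htu : t * u = m) (hut : t ⬝ᵥ u = 1) :
    (diagonal t - vecMulVec m t) * vecMulVec u t = 0 := by
  rw [sub_mul, diagonal_mul_vecMulVec, vecMulVec_mul_vecMulVec, hut, one_smul, htu, sub_self]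

end Matrix

namespace Roulette

variable (N : ℕ)

def transient : Fin (N + 2) → ℝ := fun i => if i = Fin.last (N + 1) then 0 else 1

noncomputable def uniform : Fin (N + 2) → ℝ := ((N : ℝ) + 1)⁻¹ • transient N

noncomputable def absorbProj : Matrix (Fin (N + 2)) (Fin (N + 2)) ℝ :=
  vecMulVec (uniform N - Pi.single (Fin.last (N + 1)) 1) (transient N)

noncomputable def centerProj : Matrix (Fin (N + 2)) (Fin (N + 2)) ℝ :=
  diagonal (transient N) - vecMulVec (uniform N) (transient N)

theorem isIdempotentElem_transient : IsIdempotentElem (transient N) := by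
  ext i
  by_cases hi : i = Fin.last (N + 1) <;> simp [transient, hi]

theorem transient_mul_uniform : transient N * uniform N = uniform N := by
  rw [uniform, mul_smul_comm, (isIdempotentElem_transient N).eq]

theorem transient_dotProduct_uniform : transient N ⬝ᵥ uniform N = 1 := by
  have hsum : transient N ⬝ᵥ transient N = N + 1 := by
    simp [dotProduct, Fin.sum_univ_castSucc, transient, (Fin.castSucc_lt_last _).ne]
  rw [uniform, dotProduct_smul, hsum, smul_eq_mul, inv_mul_cancel₀ (by positivity)]

theorem transient_mul_single_last : transient N * Pi.single (Fin.last (N + 1)) 1 = 0 := by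
  ext i
  by_cases hi : i = Fin.last (N + 1) <;> simp [transient, hi]

theorem transient_dotProduct_uniform_sub_single :
    transient N ⬝ᵥ (uniform N - Pi.single (Fin.last (N + 1)) 1) = 1 := by
  simp [dotProduct_sub, transient_dotProduct_uniform, transient]

theorem transient_mul_uniform_sub_single :
    transient N * (uniform N - Pi.single (Fin.last (N + 1)) 1) = uniform N := by
  rw [mul_sub, transient_mul_uniform, transient_mul_single_last, sub_zero]

theorem isIdempotentElem_absorbProj : IsIdempotentElem (absorbProj N) :=
  isIdempotentElem_vecMulVec_s5 (transient_dotProduct_uniform_sub_single N)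

theorem isIdempotentElem_centerProj : IsIdempotentElem (centerProj N) :=
  isIdempotentElem_diagonal_sub_vecMulVec (isIdempotentElem_transient N)
    (transient_mul_uniform N) (transient_dotProduct_uniform N)

theorem absorbProj_mul_centerProj : absorbProj N * centerProj N = 0 :=
  vecMulVec_mul_diagonal_sub_vecMulVec (isIdempotentElem_transient N)
    (transient_dotProduct_uniform N)

theorem centerProj_mul_absorbProj : centerProj N * absorbProj N = 0 :=
  diagonal_sub_vecMulVec_mul_vecMulVec (transient_mul_uniform_sub_single N)
    (transient_dotProduct_uniform_sub_single N)

theorem eq_neg_centerProj {Qu : Matrix (Fin (N + 2)) (Fin (N + 2)) ℝ}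
    (hQu : ∀ i j, Qu i j =
      if i ≠ Fin.last (N + 1) ∧ j ≠ Fin.last (N + 1) then
        (1 / (N + 1 : ℝ) - if i = j then 1 else 0)
      else 0) :
    Qu = -centerProj N := by
  ext i j
  rw [hQu]
  by_cases hi : i = Fin.last (N + 1) <;> by_cases hj : j = Fin.last (N + 1) <;>
    by_cases hij : i = j <;>
    simp [centerProj, uniform, transient, vecMulVec_apply, diagonal_apply, hi, hj, hij]

theorem eq_neg_absorbProj_add_centerProj {Qa : Matrix (Fin (N + 2)) (Fin (N + 2)) ℝ}
    (hQa : ∀ i j, Qa i j =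
      (if i = Fin.last (N + 1) then (1 : ℝ) else 0) - (if i = j then 1 else 0)) :
    Qa = -(absorbProj N + centerProj N) := by
  ext i j
  rw [hQa]
  by_cases hi : i = Fin.last (N + 1) <;> by_cases hj : j = Fin.last (N + 1) <;>
    by_cases hij : i = j <;>
    simp [absorbProj, centerProj, uniform, transient, vecMulVec_apply,
      @eq_comm _ (Fin.last (N + 1)), hi, hj, hij]

theorem exp_smul_roulette (pm σ : ℝ) :
    exp (σ • (pm • -(absorbProj N + centerProj N) + (1 - pm) • -centerProj N)) =
      1 + (Real.exp (-(σ * pm)) - 1) • absorbProj N +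
        (Real.exp (-(σ * pm)) * Real.exp (-((1 - pm) * σ)) - 1) • centerProj N := by
  have hsplit : Real.exp (-σ) = Real.exp (-(σ * pm)) * Real.exp (-((1 - pm) * σ)) := by
    rw [← Real.exp_add]
    ring_nf
  rw [show σ • (pm • -(absorbProj N + centerProj N) + (1 - pm) • -centerProj N) =
      (-(σ * pm)) • absorbProj N + (-σ) • centerProj N by module,
    exp_smul_add_smul_of_orthogonal (isIdempotentElem_absorbProj N)
      (isIdempotentElem_centerProj N) (absorbProj_mul_centerProj N) (centerProj_mul_absorbProj N),
    hsplit]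

end Roulette

theorem stmt_5_general (N : ℕ) (pm σ : ℝ)
    (Qu Qa : Matrix (Fin (N + 2)) (Fin (N + 2)) ℝ)
    (hQu : ∀ i j, Qu i j =
      if i ≠ Fin.last (N + 1) ∧ j ≠ Fin.last (N + 1) then
        (1 / (N + 1 : ℝ) - if i = j then 1 else 0)
      else 0)
    (hQa : ∀ i j, Qa i j =
      (if i = Fin.last (N + 1) then (1 : ℝ) else 0) - (if i = j then 1 else 0)) :
    (∀ i j, i ≠ j → i ≠ Fin.last (N + 1) → j ≠ Fin.last (N + 1) →
      NormedSpace.exp (σ • (pm • Qa + (1 - pm) • Qu)) i j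
        = Real.exp (-(σ * pm)) * (1 / (N + 1 : ℝ)) * (1 - Real.exp (-((1 - pm) * σ)))) ∧
    (∀ i, i ≠ Fin.last (N + 1) →
      NormedSpace.exp (σ • (pm • Qa + (1 - pm) • Qu)) i i
        = Real.exp (-(σ * pm)) *
            (1 - ((N : ℝ) / (N + 1 : ℝ)) * (1 - Real.exp (-((1 - pm) * σ))))) ∧
    (∀ j, j ≠ Fin.last (N + 1) →
      NormedSpace.exp (σ • (pm • Qa + (1 - pm) • Qu)) (Fin.last (N + 1)) j
        = 1 - Real.exp (-(σ * pm))) ∧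
    (∀ i, i ≠ Fin.last (N + 1) →
      NormedSpace.exp (σ • (pm • Qa + (1 - pm) • Qu)) i (Fin.last (N + 1)) = 0) ∧
    NormedSpace.exp (σ • (pm • Qa + (1 - pm) • Qu))
      (Fin.last (N + 1)) (Fin.last (N + 1)) = 1 := by
  rw [Roulette.eq_neg_absorbProj_add_centerProj N hQa, Roulette.eq_neg_centerProj N hQu,
    Roulette.exp_smul_roulette]
  clear hQu hQa
  refine ⟨fun i j hij hi hj => ?_, fun i hi => ?_, fun j hj => ?_, fun i hi => ?_, ?_⟩ <;>
    simp [Roulette.absorbProj, Roulette.centerProj, Roulette.uniform, Roulette.transient,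
      vecMulVec_apply, one_apply, @eq_comm _ (Fin.last (N + 1)), *] <;>
    field_simp <;> ring

/-- Entries of the matrix exponential of the roulette rate matrix
`Q_roul = p_m • Q_abs + (1 - p_m) • Q_unif`, with `n = N + 2` states and absorbing
state `Fin.last (N+1)`. -/
theorem stmt_5 (N : ℕ) (pm σ : ℝ) (hpm0 : 0 ≤ pm) (hpm1 : pm ≤ 1) (hσ : 0 ≤ σ)
    (Qu Qa : Matrix (Fin (N + 2)) (Fin (N + 2)) ℝ)
    (hQu : ∀ i j, Qu i j =
      if i ≠ Fin.last (N + 1) ∧ j ≠ Fin.last (N + 1) then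
        (1 / (N + 1 : ℝ) - if i = j then 1 else 0)
      else 0)
    (hQa : ∀ i j, Qa i j =
      (if i = Fin.last (N + 1) then (1 : ℝ) else 0) - (if i = j then 1 else 0)) :
    (∀ i j, i ≠ j → i ≠ Fin.last (N + 1) → j ≠ Fin.last (N + 1) →
      NormedSpace.exp (σ • (pm • Qa + (1 - pm) • Qu)) i j
        = Real.exp (-(σ * pm)) * (1 / (N + 1 : ℝ)) * (1 - Real.exp (-((1 - pm) * σ)))) ∧
    (∀ i, i ≠ Fin.last (N + 1) →
      NormedSpace.exp (σ • (pm • Qa + (1 - pm) • Qu)) i i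
        = Real.exp (-(σ * pm)) *
            (1 - ((N : ℝ) / (N + 1 : ℝ)) * (1 - Real.exp (-((1 - pm) * σ))))) ∧
    (∀ j, j ≠ Fin.last (N + 1) →
      NormedSpace.exp (σ • (pm • Qa + (1 - pm) • Qu)) (Fin.last (N + 1)) j
        = 1 - Real.exp (-(σ * pm))) ∧
    (∀ i, i ≠ Fin.last (N + 1) →
      NormedSpace.exp (σ • (pm • Qa + (1 - pm) • Qu)) i (Fin.last (N + 1)) = 0) ∧
    NormedSpace.exp (σ • (pm • Qa + (1 - pm) • Qu))
      (Fin.last (N + 1)) (Fin.last (N + 1)) = 1 :=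
  stmt_5_general N pm σ Qu Qa hQu hQa
end
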